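/- For f, g ∈ L²([0,T]) and p ≥ 1, ‖E(f)^{-1} − E(g)^{-1}‖_{L^p} ≤ C·S_p(√2·|f − g|), where E(h) = exp(δ(h) − |h|²/2), S_p(λ) = λ·exp(p·λ²) + exp(λ²/2) − 1, and C depends only on p and |g|. -/

import Mathlib

/-!
Write `E(h)⁻¹ = exp (‖h‖²/2 - δ h)`. Pointwise `|eˣ - eʸ| ≤ |x - y| (eˣ + eʸ)`, and the two
exponents differ by `(‖f‖² - ‖g‖²)/2 - δ (f - g)`. The random factor `|δ v|` is dominated by
`‖v‖ (exp (δ u) + exp (-δ u))` with `‖u‖ ≤ 1`, so the difference is bounded by a combination of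
variables `exp (δ h)` with `‖h‖ ≤ ‖g‖ + ‖f - g‖ + 1`, whose `Lᵖ` norms `exp (p ‖h‖²/2)` are given by
the Gaussian moment generating function. The result is a bound
`C(p, ‖g‖) σ exp (2 p σ²)` with `σ = ‖f - g‖`, and `σ exp (2 p σ²) ≤ S_p(√2 σ)`.
-/

open MeasureTheory ProbabilityTheory Real

/-- `S_p(λ) = λ·exp(p·λ²) + exp(λ²/2) − 1`. -/
noncomputable def Spoly (p l : ℝ) : ℝ :=
  l * Real.exp (p * l ^ 2) + Real.exp (l ^ 2 / 2) - 1

open scoped ENNReal NNReal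

theorem Real.exp_sub_exp_le_mul_exp (x y : ℝ) : exp x - exp y ≤ (x - y) * exp x := by
  have h := one_sub_le_exp_neg (x - y)
  rw [neg_sub, exp_sub] at h
  have hx := exp_pos x
  rw [le_div_iff₀ hx] at h
  linarith

theorem Real.abs_exp_sub_exp_le (x y : ℝ) : |exp x - exp y| ≤ |x - y| * (exp x + exp y) := by
  have hxy := exp_sub_exp_le_mul_exp x y
  have hyx := exp_sub_exp_le_mul_exp y x
  rw [abs_sub_le_iff]
  constructor
  · nlinarith [le_abs_self (x - y), exp_pos x, exp_pos y, abs_nonneg (x - y)]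
  · nlinarith [neg_abs_le (x - y), exp_pos x, exp_pos y, abs_nonneg (x - y)]

theorem Real.abs_exp_sub_sub_exp_sub_le (a b x y : ℝ) :
    |exp (a - x) - exp (b - y)| ≤ (|a - b| + |x - y|) * (exp (a - x) + exp (b - y)) := by
  refine (abs_exp_sub_exp_le _ _).trans ?_
  gcongr
  calc |a - x - (b - y)| = |(a - b) - (x - y)| := by ring_nf
    _ ≤ |a - b| + |x - y| := abs_sub _ _

theorem Real.abs_le_exp_add_exp_neg (x : ℝ) : |x| ≤ exp x + exp (-x) := by
  linarith [add_one_le_exp |x|, exp_abs_le x]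

theorem eLpNorm_exp_gaussianReal (μ : ℝ) (v : ℝ≥0) {p : ℝ} (hp : 0 < p) :
    eLpNorm exp (ENNReal.ofReal p) (gaussianReal μ v) = ENNReal.ofReal (exp (μ + p * v / 2)) := by
  rw [eLpNorm_eq_lintegral_rpow_enorm_toReal (by simpa using hp) ENNReal.ofReal_ne_top,
    ENNReal.toReal_ofReal hp.le]
  have hpow : ∀ x, ‖exp x‖ₑ ^ p = ENNReal.ofReal (exp (p * x)) := fun x => by
    rw [Real.enorm_eq_ofReal (exp_nonneg _), ENNReal.ofReal_rpow_of_nonneg (exp_nonneg _) hp.le,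
      ← exp_mul, mul_comm]
  simp_rw [hpow]
  rw [← ofReal_integral_eq_lintegral_ofReal (integrable_exp_mul_gaussianReal p)
    (Filter.Eventually.of_forall fun _ => (exp_pos _).le)]
  have hmgf : ∫ x, exp (p * x) ∂gaussianReal μ v = exp (μ * p + v * p ^ 2 / 2) :=
    congrFun mgf_fun_id_gaussianReal p
  rw [hmgf, ENNReal.ofReal_rpow_of_nonneg (exp_nonneg _) (by positivity), ← exp_mul]
  congr 2
  field_simp

theorem eLpNorm_exp_comp_of_map_eq_gaussianReal {Ω : Type*} [MeasurableSpace Ω] {P : Measure Ω}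
    {X : Ω → ℝ} {μ : ℝ} {v : ℝ≥0} (hX : P.map X = gaussianReal μ v) {p : ℝ} (hp : 0 < p) :
    eLpNorm (fun ω => exp (X ω)) (ENNReal.ofReal p) P = ENNReal.ofReal (exp (μ + p * v / 2)) := by
  have hXm : AEMeasurable X P := aemeasurable_of_map_neZero (by rw [hX]; infer_instance)
  rw [← eLpNorm_exp_gaussianReal μ v hp, ← hX,
    eLpNorm_map_measure continuous_exp.aestronglyMeasurable hXm]
  rfl

theorem LinearMap.exists_norm_le_one_abs_apply_le {H Ω : Type*} [NormedAddCommGroup H]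
    [NormedSpace ℝ H] (δ : H →ₗ[ℝ] Ω → ℝ) (v : H) :
    ∃ u : H, ‖u‖ ≤ 1 ∧ ∀ ω, |δ v ω| ≤ ‖v‖ * (exp (δ u ω) + exp (-δ u ω)) := by
  rcases eq_or_ne v 0 with rfl | hv
  · exact ⟨0, by simp, fun ω => by simp⟩
  refine ⟨‖v‖⁻¹ • v, (norm_smul_inv_norm hv).le, fun ω => ?_⟩
  have hδv : δ v ω = ‖v‖ * δ (‖v‖⁻¹ • v) ω := by
    rw [map_smul, Pi.smul_apply, smul_eq_mul, mul_inv_cancel_left₀ (norm_ne_zero_iff.mpr hv)]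
  rw [hδv, abs_mul, abs_norm]
  exact mul_le_mul_of_nonneg_left (abs_le_exp_add_exp_neg _) (norm_nonneg v)

theorem abs_sq_norm_sub_sq_norm_le {E : Type*} [SeminormedAddCommGroup E] (f g : E) :
    |‖f‖ ^ 2 - ‖g‖ ^ 2| ≤ ‖f - g‖ * (2 * ‖g‖ + ‖f - g‖) := by
  rw [sq_sub_sq, abs_mul, abs_of_nonneg (by positivity), mul_comm]
  exact mul_le_mul (abs_norm_sub_norm_le f g) (by linarith [norm_le_norm_add_norm_sub' f g])
    (by positivity) (norm_nonneg _)

def IsIsonormal {H Ω : Type*} [SeminormedAddCommGroup H] [Module ℝ H] [MeasurableSpace Ω]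
    (δ : H →ₗ[ℝ] Ω → ℝ) (P : Measure Ω) : Prop :=
  ∀ h, P.map (δ h) = gaussianReal 0 (‖h‖₊ ^ 2)

namespace IsIsonormal

variable {H Ω : Type*} [NormedAddCommGroup H] [NormedSpace ℝ H] [MeasurableSpace Ω]
  {P : Measure Ω} {δ : H →ₗ[ℝ] Ω → ℝ} {p : ℝ}

theorem aemeasurable (hδ : IsIsonormal δ P) (h : H) : AEMeasurable (δ h) P :=
  aemeasurable_of_map_neZero (by rw [hδ h]; infer_instance)

theorem aestronglyMeasurable_mul_exp (hδ : IsIsonormal δ P) (k : ℝ) (h : H) :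
    AEStronglyMeasurable (fun ω => k * exp (δ h ω)) P :=
  ((measurable_exp.comp_aemeasurable (hδ.aemeasurable h)).const_mul k).aestronglyMeasurable

theorem eLpNorm_const_mul_exp_le (hδ : IsIsonormal δ P) (hp : 0 < p) {k : ℝ} (hk : 0 ≤ k)
    {h : H} {R : ℝ} (hR : ‖h‖ ≤ R) :
    eLpNorm (fun ω => k * exp (δ h ω)) (ENNReal.ofReal p) P
      ≤ ENNReal.ofReal (k * exp (p * R ^ 2 / 2)) := by
  have hexp := eLpNorm_exp_comp_of_map_eq_gaussianReal (hδ h) hp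
  rw [show (fun ω => k * exp (δ h ω)) = k • fun ω => exp (δ h ω) from rfl, eLpNorm_const_smul,
    hexp, enorm_eq_ofReal hk, ← ENNReal.ofReal_mul hk]
  gcongr
  push_cast
  nlinarith [pow_le_pow_left₀ (norm_nonneg h) hR 2]

theorem eLpNorm_add_abs_mul_exp_le (hδ : IsIsonormal δ P) (hp : 1 ≤ p) {c : ℝ} (hc : 0 ≤ c)
    (a : ℝ) (v h : H) :
    eLpNorm (fun ω => (c + |δ v ω|) * exp (a - δ h ω)) (ENNReal.ofReal p) P
      ≤ ENNReal.ofReal ((c + 2 * ‖v‖) * exp (a + p * (‖h‖ + 1) ^ 2 / 2)) := by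
  obtain ⟨u, hu, hδv⟩ := δ.exists_norm_le_one_abs_apply_le v
  have hp0 : 0 < p := by linarith
  have hpt : ∀ ω, ‖(c + |δ v ω|) * exp (a - δ h ω)‖ ≤ c * exp a * exp (δ (-h) ω)
      + ‖v‖ * exp a * exp (δ (u - h) ω) + ‖v‖ * exp a * exp (δ (-u - h) ω) := by
    intro ω
    rw [norm_of_nonneg (by positivity)]
    calc (c + |δ v ω|) * exp (a - δ h ω)
        ≤ (c + ‖v‖ * (exp (δ u ω) + exp (-δ u ω))) * exp (a - δ h ω) := by gcongr; exact hδv ω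
      _ = _ := by
        simp only [map_neg, map_sub, Pi.neg_apply, Pi.sub_apply, exp_sub, exp_neg]
        field_simp
        ring
  have hq : 1 ≤ ENNReal.ofReal p := by simpa using hp
  have hR : ∀ w : H, ‖w‖ ≤ 1 → ‖w - h‖ ≤ ‖h‖ + 1 := fun w hw =>
    (norm_sub_le w h).trans (by linarith)
  calc _ ≤ _ := eLpNorm_mono_real hpt
    _ ≤ eLpNorm (fun ω => c * exp a * exp (δ (-h) ω)) (ENNReal.ofReal p) P
        + eLpNorm (fun ω => ‖v‖ * exp a * exp (δ (u - h) ω)) (ENNReal.ofReal p) P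
        + eLpNorm (fun ω => ‖v‖ * exp a * exp (δ (-u - h) ω)) (ENNReal.ofReal p) P := by
      refine (eLpNorm_add_le ?_ (hδ.aestronglyMeasurable_mul_exp _ _) hq).trans ?_
      · exact (hδ.aestronglyMeasurable_mul_exp _ _).add (hδ.aestronglyMeasurable_mul_exp _ _)
      gcongr
      exact eLpNorm_add_le (hδ.aestronglyMeasurable_mul_exp _ _)
        (hδ.aestronglyMeasurable_mul_exp _ _) hq
    _ ≤ ENNReal.ofReal (c * exp a * exp (p * (‖h‖ + 1) ^ 2 / 2))
        + ENNReal.ofReal (‖v‖ * exp a * exp (p * (‖h‖ + 1) ^ 2 / 2))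
        + ENNReal.ofReal (‖v‖ * exp a * exp (p * (‖h‖ + 1) ^ 2 / 2)) := by
      gcongr
      · exact hδ.eLpNorm_const_mul_exp_le hp0 (by positivity) (by rw [norm_neg]; linarith)
      · exact hδ.eLpNorm_const_mul_exp_le hp0 (by positivity) (hR u hu)
      · exact hδ.eLpNorm_const_mul_exp_le hp0 (by positivity) (hR (-u) (by rwa [norm_neg]))
    _ = _ := by
      rw [← ENNReal.ofReal_add (by positivity) (by positivity),
        ← ENNReal.ofReal_add (by positivity) (by positivity), exp_add]
      ring_nf

theorem eLpNorm_inv_exp_sub_inv_exp_le (hδ : IsIsonormal δ P) (hp : 1 ≤ p) (f g : H) :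
    eLpNorm (fun ω => (exp (δ f ω - ‖f‖ ^ 2 / 2))⁻¹ - (exp (δ g ω - ‖g‖ ^ 2 / 2))⁻¹)
        (ENNReal.ofReal p) P
      ≤ ENNReal.ofReal (‖f - g‖ * ((2 * ‖g‖ + ‖f - g‖ + 4)
          * exp ((1 + p) * (‖g‖ + ‖f - g‖ + 1) ^ 2 / 2))) := by
  set σ := ‖f - g‖
  set c := |‖f‖ ^ 2 / 2 - ‖g‖ ^ 2 / 2| with hc_def
  set F : H → Ω → ℝ := fun h ω => (c + |δ (f - g) ω|) * exp (‖h‖ ^ 2 / 2 - δ h ω)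
  have hpt : ∀ ω, ‖(exp (δ f ω - ‖f‖ ^ 2 / 2))⁻¹ - (exp (δ g ω - ‖g‖ ^ 2 / 2))⁻¹‖
      ≤ F f ω + F g ω := fun ω => by
    rw [← exp_neg, ← exp_neg, neg_sub, neg_sub, norm_eq_abs]
    simpa only [F, map_sub, Pi.sub_apply, mul_add] using
      abs_exp_sub_sub_exp_sub_le _ _ (δ f ω) (δ g ω)
  have hF : ∀ h, eLpNorm (F h) (ENNReal.ofReal p) P
      ≤ ENNReal.ofReal ((c + 2 * σ) * exp (‖h‖ ^ 2 / 2 + p * (‖h‖ + 1) ^ 2 / 2)) := fun h =>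
    hδ.eLpNorm_add_abs_mul_exp_le hp (abs_nonneg _) _ (f - g) h
  have hFm : ∀ h, AEStronglyMeasurable (F h) P := fun h =>
    (((hδ.aemeasurable _).abs.const_add c).mul
      ((hδ.aemeasurable _).const_sub _).exp).aestronglyMeasurable
  have hexp : ∀ h : H, ‖h‖ ≤ ‖g‖ + σ → exp (‖h‖ ^ 2 / 2 + p * (‖h‖ + 1) ^ 2 / 2)
      ≤ exp ((1 + p) * (‖g‖ + σ + 1) ^ 2 / 2) := fun h hh => by
    have := pow_le_pow_left₀ (by positivity) (add_le_add_right hh 1) 2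
    gcongr
    nlinarith [norm_nonneg h]
  have hc : 2 * c ≤ σ * (2 * ‖g‖ + σ) := by
    rw [hc_def, ← sub_div, abs_div, abs_two]
    linarith [abs_sq_norm_sub_sq_norm_le f g]
  calc _ ≤ eLpNorm (F f + F g) (ENNReal.ofReal p) P := eLpNorm_mono_real hpt
    _ ≤ eLpNorm (F f) (ENNReal.ofReal p) P + eLpNorm (F g) (ENNReal.ofReal p) P :=
      eLpNorm_add_le (hFm f) (hFm g) (by simpa using hp)
    _ ≤ _ := add_le_add (hF f) (hF g)
    _ = _ := (ENNReal.ofReal_add (by positivity) (by positivity)).symm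
    _ ≤ _ := by
      refine ENNReal.ofReal_le_ofReal ?_
      have hcσ : 0 ≤ c + 2 * σ := by positivity
      have hEf := mul_le_mul_of_nonneg_left (hexp f (norm_le_norm_add_norm_sub' f g)) hcσ
      have hEg := mul_le_mul_of_nonneg_left (hexp g (le_add_of_nonneg_right (norm_nonneg _))) hcσ
      nlinarith [mul_le_mul_of_nonneg_right hc (exp_pos ((1 + p) * (‖g‖ + σ + 1) ^ 2 / 2)).le]

end IsIsonormal

theorem mul_exp_le_Spoly (p : ℝ) {σ : ℝ} (hσ : 0 ≤ σ) :
    σ * exp (2 * p * σ ^ 2) ≤ Spoly p (√2 * σ) := by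
  have hsq : (√2 * σ) ^ 2 = 2 * σ ^ 2 := by rw [mul_pow, sq_sqrt zero_le_two]
  have hσ' : σ ≤ √2 * σ := le_mul_of_one_le_left hσ (by simp [Real.one_le_sqrt])
  rw [Spoly, hsq, ← mul_assoc, mul_comm p 2]
  have := mul_le_mul_of_nonneg_right hσ' (exp_pos (2 * p * σ ^ 2)).le
  linarith [one_le_exp (by positivity : 0 ≤ 2 * σ ^ 2 / 2)]

noncomputable def invStochExpConst (p G : ℝ) : ℝ :=
  (2 * G + 5) * exp (3 * (1 + p) * (G + 1) ^ 2 / 2)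

theorem invStochExpConst_pos (p : ℝ) {G : ℝ} (hG : 0 ≤ G) : 0 < invStochExpConst p G := by
  unfold invStochExpConst
  positivity

theorem add_mul_exp_le_invStochExpConst_mul {p G : ℝ} (hp : 1 ≤ p) (hG : 0 ≤ G) (σ : ℝ) :
    (2 * G + σ + 4) * exp ((1 + p) * (G + σ + 1) ^ 2 / 2)
      ≤ invStochExpConst p G * exp (2 * p * σ ^ 2) := by
  have hlin : 2 * G + σ + 4 ≤ (2 * G + 5) * exp (σ ^ 2 / 2) := by
    have h1 := one_le_exp (by positivity : 0 ≤ σ ^ 2 / 2)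
    have h2 := add_one_le_exp (σ ^ 2 / 2)
    nlinarith [sq_nonneg (σ - 1)]
  -- `2 (G + 1) σ ≤ 2 (G + 1)² + σ² / 2`; for `p ≥ 1` the σ²-coefficient `3 (1 + p) / 4 + 1 / 2`
  -- stays below `2 p`.
  have hquad : σ ^ 2 / 2 + (1 + p) * (G + σ + 1) ^ 2 / 2
      ≤ 3 * (1 + p) * (G + 1) ^ 2 / 2 + 2 * p * σ ^ 2 := by
    nlinarith [mul_nonneg (by linarith : (0:ℝ) ≤ 1 + p) (sq_nonneg (2 * (G + 1) - σ)),
      mul_nonneg (by linarith : (0:ℝ) ≤ p - 1) (sq_nonneg σ)]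
  calc (2 * G + σ + 4) * exp ((1 + p) * (G + σ + 1) ^ 2 / 2)
      ≤ (2 * G + 5) * exp (σ ^ 2 / 2) * exp ((1 + p) * (G + σ + 1) ^ 2 / 2) := by gcongr
    _ ≤ (2 * G + 5) * exp (3 * (1 + p) * (G + 1) ^ 2 / 2 + 2 * p * σ ^ 2) := by
      rw [mul_assoc, ← exp_add]
      gcongr
    _ = invStochExpConst p G * exp (2 * p * σ ^ 2) := by
      rw [invStochExpConst, exp_add]
      ring

/-- For `f, g ∈ L²([0,T])` and `p ≥ 1`,
`‖E(f)⁻¹ − E(g)⁻¹‖_{L^p} ≤ C·S_p(√2·|f − g|)`, where `E(h) = exp(δ(h) − |h|²/2)`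
is the stochastic exponential and `C` depends only on `p` and `|g|`. -/
theorem lpNorm_inv_stochExp_sub_inv_stochExp :
    ∃ C : ℝ → ℝ → ℝ, ∀ p : ℝ, 1 ≤ p →
      ∀ (H : Type) (_ : NormedAddCommGroup H) (_ : InnerProductSpace ℝ H)
        (Ω : Type) (_ : MeasurableSpace Ω) (P : Measure Ω),
        IsProbabilityMeasure P →
        ∀ (δ : H →ₗ[ℝ] Ω → ℝ),
          (∀ h : H, Measure.map (δ h) P = gaussianReal 0 (‖h‖₊ ^ 2)) →
          ∀ f g : H,
            0 < C p ‖g‖ ∧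
            eLpNorm
                (fun ω => (Real.exp (δ f ω - ‖f‖ ^ 2 / 2))⁻¹
                  - (Real.exp (δ g ω - ‖g‖ ^ 2 / 2))⁻¹)
                (ENNReal.ofReal p) P
              ≤ ENNReal.ofReal (C p ‖g‖ * Spoly p (Real.sqrt 2 * ‖f - g‖)) := by
  refine ⟨invStochExpConst, fun p hp H _ _ Ω _ P _ δ hδ f g => ⟨?_, ?_⟩⟩
  · exact invStochExpConst_pos p (norm_nonneg g)
  refine (IsIsonormal.eLpNorm_inv_exp_sub_inv_exp_le hδ hp f g).trans (ENNReal.ofReal_le_ofReal ?_)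
  calc _ ≤ ‖f - g‖ * (invStochExpConst p ‖g‖ * exp (2 * p * ‖f - g‖ ^ 2)) :=
      mul_le_mul_of_nonneg_left (add_mul_exp_le_invStochExpConst_mul hp (norm_nonneg g) _)
        (norm_nonneg (f - g))
    _ = invStochExpConst p ‖g‖ * (‖f - g‖ * exp (2 * p * ‖f - g‖ ^ 2)) := by ring
    _ ≤ _ := mul_le_mul_of_nonneg_left (mul_exp_le_Spoly p (norm_nonneg _))
      (invStochExpConst_pos p (norm_nonneg g)).le
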